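/- Let T = T_{α,β} be the balanced spider with α ≥ 3 legs each of order β ≥ 1, with center vertex c, and let s be an integer with 1 ≤ s ≤ β. Then: (i) the minimum of pt₊(T;B) over all PSD-forcing sets B consisting of exactly s vertices from each leg together with c equals ⌈(β − s)/(2s + 1)⌉; and (ii) the minimum of pt₊(T;B) over all PSD-forcing sets B consisting of exactly s vertices from each leg and not containing c equals ⌈(β + 1 − s)/(2s)⌉. -/

import Mathlib

open SimpleGraph

/-- `v` PSD-forces `w` given blue set `B`: `v` is blue, adjacent to the white vertex `w`,
and `w` is the only white neighbor of `v` in the component of `G - B` containing `w`. -/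
def psdForces {V : Type*} (G : SimpleGraph V) (B : Set V) (v w : V) : Prop :=
  v ∈ B ∧ G.Adj v w ∧ ∃ hw : w ∉ B,
    ∀ (u : V) (hu : u ∉ B), G.Adj v u →
      (G.induce {x | x ∉ B}).Reachable ⟨u, hu⟩ ⟨w, hw⟩ → u = w

/-- One time-step of PSD forcing: all forceable white vertices become blue simultaneously. -/
def psdStep {V : Type*} (G : SimpleGraph V) (B : Set V) : Set V :=
  B ∪ {w | ∃ v, psdForces G B v w}

/-- `B` is a PSD-forcing set of `G` if iterating the PSD color change rule colors all of `V`. -/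
def IsPSDForcing {V : Type*} (G : SimpleGraph V) (B : Set V) : Prop :=
  ∃ t, (psdStep G)^[t] B = Set.univ

/-- The PSD-propagation time of `B` in `G`. -/
noncomputable def psdPt {V : Type*} (G : SimpleGraph V) (B : Set V) : ℕ :=
  sInf {t | (psdStep G)^[t] B = Set.univ}

/-- The PSD-throttling number of `G`. -/
noncomputable def psdTh {V : Type*} (G : SimpleGraph V) : ℕ :=
  sInf {k | ∃ B : Finset V, IsPSDForcing G ↑B ∧ k = B.card + psdPt G ↑B}

/-- The weighted PSD-throttling number of `(G, w)`. -/
noncomputable def psdThW {V : Type*} (G : SimpleGraph V) (w : V → ℕ) : ℕ :=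
  sInf {k | ∃ B : Finset V, IsPSDForcing G ↑B ∧ k = (∑ x ∈ B, w x) + psdPt G ↑B}

/-- The spider `S(l₀, …, l_{k-1})`: a center vertex `none` adjacent to the first vertex
of each of `k` disjoint paths, the `i`-th of order `l i`. -/
def spider (k : ℕ) (l : Fin k → ℕ) : SimpleGraph (Option ((i : Fin k) × Fin (l i))) :=
  SimpleGraph.fromRel (fun x y =>
    (∃ (i : Fin k) (j : Fin (l i)), (j : ℕ) = 0 ∧ x = none ∧ y = some ⟨i, j⟩) ∨
    (∃ (i : Fin k) (j j' : Fin (l i)), (j' : ℕ) = (j : ℕ) + 1 ∧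
      x = some ⟨i, j⟩ ∧ y = some ⟨i, j'⟩))

/-- The balanced spider `T_{α,β}` with `α` legs each of order `β`. -/
abbrev balancedSpider (α β : ℕ) : SimpleGraph (Option ((_ : Fin α) × Fin β)) :=
  spider α (fun _ => β)

/-!
In a spider two distinct neighbours of a vertex `v` lie in different components of the spider
minus `v`, so every blue vertex forces all of its white neighbours at once: after `t` steps the
blue vertices are those within distance `t` of the initial set.

Folding the spider onto the path through one leg is 1-Lipschitz, so after `t` steps every vertex
of that leg lies within `t` of the fold of an initially blue vertex. The `t`-balls around the `s`
blue positions of the leg and the `t` vertices nearest the center therefore cover the leg, giving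
`β ≤ (2s + 1)t + s`. If the center is white, take the leg whose lowest blue vertex `m` is nearest
the center: the center turns blue only at time `m + 1 ≤ t`, and whatever is reached through the
center already lies in the ball around `m`, which the center cuts off; hence `β + 1 ≤ 2st + s`.
Blue vertices spaced `2t + 1` apart on every leg attain both bounds.
-/

section PSD

variable {V : Type*} {G : SimpleGraph V} {B : Set V}

theorem apply_eq_of_reachable {X : Type*} {H : SimpleGraph V} (σ : V → X)
    (hσ : ∀ x y, H.Adj x y → σ x = σ y) {u w : V} (h : H.Reachable u w) : σ u = σ w := by
  obtain ⟨p⟩ := h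
  induction p with
  | nil => rfl
  | cons hadj _ ih => exact (hσ _ _ hadj).trans ih

theorem psdForces_of_separating {X : Type*} (σ : V → X) {v w : V} (hv : v ∈ B) (hw : w ∉ B)
    (hvw : G.Adj v w) (hσ : ∀ x y, G.Adj x y → x ≠ v → y ≠ v → σ x = σ y)
    (hsep : ∀ u, G.Adj v u → σ u = σ w → u = w) : psdForces G B v w := by
  refine ⟨hv, hvw, hw, fun u hu hvu hr => hsep u hvu ?_⟩
  refine apply_eq_of_reachable (fun x : {x // x ∉ B} => σ x) (fun x y hxy => ?_) hr
  exact hσ x y hxy (fun h => x.2 (h ▸ hv)) (fun h => y.2 (h ▸ hv))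

theorem monotone_iterate_psdStep : Monotone fun t => (psdStep G)^[t] B :=
  monotone_nat_of_le_succ fun t => by
    rw [Function.iterate_succ_apply']
    exact Set.subset_union_left

theorem subset_iterate_psdStep (t : ℕ) : B ⊆ (psdStep G)^[t] B :=
  monotone_iterate_psdStep (Nat.zero_le t)

theorem exists_dist_le_of_mem_iterate_psdStep {M : Type*} [PseudoMetricSpace M] (π : V → M)
    (hπ : ∀ x y, G.Adj x y → dist (π x) (π y) ≤ 1) :
    ∀ t, ∀ x ∈ (psdStep G)^[t] B, ∃ b ∈ B, dist (π x) (π b) ≤ t := by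
  intro t
  induction t with
  | zero => exact fun x hx => ⟨x, hx, by simp⟩
  | succ t ih =>
    intro x hx
    rw [Function.iterate_succ_apply'] at hx
    rcases hx with hx | ⟨v, hv, hvx, -⟩
    · obtain ⟨b, hb, hd⟩ := ih x hx
      exact ⟨b, hb, by push_cast; linarith⟩
    · obtain ⟨b, hb, hd⟩ := ih v hv
      refine ⟨b, hb, ?_⟩
      calc dist (π x) (π b) ≤ dist (π x) (π v) + dist (π v) (π b) := dist_triangle _ _ _
        _ ≤ 1 + t := add_le_add (dist_comm (π x) (π v) ▸ hπ v x hvx) hd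
        _ = (t + 1 : ℕ) := by push_cast; ring

theorem iterate_psdPt (h : IsPSDForcing G B) : (psdStep G)^[psdPt G B] B = Set.univ :=
  Nat.sInf_mem h

theorem psdPt_le {t : ℕ} (h : (psdStep G)^[t] B = Set.univ) : psdPt G B ≤ t :=
  Nat.sInf_le h

end PSD

theorem natCast_sInf_eq_ceil {S : Set ℕ} {x : ℝ} (hx : 0 ≤ x) (hlow : ∀ t ∈ S, x ≤ t)
    (hmem : ∃ t ∈ S, t ≤ ⌈x⌉₊) : ((sInf S : ℕ) : ℤ) = ⌈x⌉ := by
  obtain ⟨t₀, ht₀, hle⟩ := hmem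
  have hlt : ((sInf S : ℕ) : ℝ) < x + 1 := calc
    ((sInf S : ℕ) : ℝ) ≤ ⌈x⌉₊ := by exact_mod_cast (Nat.sInf_le ht₀).trans hle
    _ < x + 1 := Nat.ceil_lt_add_one hx
  have hge : x ≤ (sInf S : ℕ) := hlow _ (Nat.sInf_mem ⟨t₀, ht₀⟩)
  rw [eq_comm, Int.ceil_eq_iff]
  push_cast
  constructor <;> linarith

theorem natCast_sub_div_le_natCast_iff {a b c t : ℕ} (hc : 0 < c) :
    ((a : ℝ) - b) / c ≤ t ↔ a ≤ c * t + b := by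
  rw [div_le_iff₀ (by exact_mod_cast hc), sub_le_iff_le_add, mul_comm]
  exact_mod_cast Iff.rfl

theorem le_add_card_mul_of_cover {n c t : ℕ} {S : Set ℕ} (hS : S.Finite)
    (hcover : ∀ q < n, q < c ∨ ∃ b ∈ S, |(q : ℤ) - b| ≤ t) : n ≤ c + S.ncard * (2 * t + 1) := by
  classical
  have hsub : Finset.range n ⊆ Finset.range c ∪
      hS.toFinset.biUnion (fun b => Finset.Icc (b - t) (b + t)) := by
    intro q hq
    rcases hcover q (Finset.mem_range.mp hq) with h | ⟨b, hb, hqb⟩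
    · exact Finset.mem_union_left _ (Finset.mem_range.mpr h)
    · refine Finset.mem_union_right _ (Finset.mem_biUnion.mpr ⟨b, hS.mem_toFinset.mpr hb, ?_⟩)
      rw [abs_le] at hqb
      exact Finset.mem_Icc.mpr ⟨by omega, by omega⟩
  calc n = (Finset.range n).card := (Finset.card_range n).symm
    _ ≤ c + ∑ b ∈ hS.toFinset, (Finset.Icc (b - t) (b + t)).card := by
      refine (Finset.card_le_card hsub).trans ((Finset.card_union_le _ _).trans ?_)
      rw [Finset.card_range]
      exact Nat.add_le_add_left Finset.card_biUnion_le c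
    _ ≤ c + ∑ _b ∈ hS.toFinset, (2 * t + 1) := by
      gcongr with b
      rw [Nat.card_Icc]
      omega
    _ = c + S.ncard * (2 * t + 1) := by
      rw [Finset.sum_const, smul_eq_mul, Set.ncard_eq_toFinset_card S hS]

/-- `s` positions on a path of order `β`, spaced `2T + 1` apart from position `a` on, but pushed
back where needed to stay inside the path. -/
def spacedPositions (s β a T k : ℕ) : ℕ :=
  min (k * (2 * T + 1) + a) (β - s + k)

section SpacedPositions

variable {s β a T : ℕ}

theorem spacedPositions_lt (hsβ : s ≤ β) {k : ℕ} (hk : k < s) : spacedPositions s β a T k < β := by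
  unfold spacedPositions
  omega

theorem spacedPositions_succ (k : ℕ) :
    spacedPositions s β a T k < spacedPositions s β a T (k + 1) ∧
      spacedPositions s β a T (k + 1) ≤ spacedPositions s β a T k + (2 * T + 1) := by
  unfold spacedPositions
  rw [add_mul, one_mul, add_right_comm]
  generalize k * (2 * T + 1) + a = c
  omega

theorem spacedPositions_strictMono : StrictMono (spacedPositions s β a T) :=
  strictMono_nat_of_lt_succ fun k => (spacedPositions_succ k).1

theorem exists_abs_sub_spacedPositions_le (hs : 1 ≤ s) (hβ : β ≤ (s - 1) * (2 * T + 1) + a + T + 1)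
    {q : ℕ} (hq : q < β) :
    q + T < a ∨ ∃ k < s, |(q : ℤ) - spacedPositions s β a T k| ≤ T := by
  by_contra! h
  obtain ⟨haq, hfar⟩ := h
  have hbelow : ∀ k < s, spacedPositions s β a T k + T < q := by
    intro k
    induction k with
    | zero =>
      intro h0
      have := hfar 0 h0
      have : spacedPositions s β a T 0 ≤ a := by unfold spacedPositions; omega
      rw [lt_abs] at *
      omega
    | succ k ih =>
      intro hk
      have := ih (by omega)
      have := (spacedPositions_succ (s := s) (β := β) (a := a) (T := T) k).2
      have := hfar (k + 1) hk
      rw [lt_abs] at *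
      omega
  have hlast := hbelow (s - 1) (by omega)
  unfold spacedPositions at hlast
  omega

end SpacedPositions

section Spider

variable {α β : ℕ} {B : Set (Option ((_ : Fin α) × Fin β))}

@[simp]
theorem balancedSpider_adj_none_some {i : Fin α} {j : Fin β} :
    (balancedSpider α β).Adj none (some ⟨i, j⟩) ↔ (j : ℕ) = 0 := by
  simp [spider, fromRel_adj]

@[simp]
theorem balancedSpider_adj_some_none {i : Fin α} {j : Fin β} :
    (balancedSpider α β).Adj (some ⟨i, j⟩) none ↔ (j : ℕ) = 0 := by
  rw [adj_comm, balancedSpider_adj_none_some]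

@[simp]
theorem balancedSpider_adj_some_some {i i' : Fin α} {j j' : Fin β} :
    (balancedSpider α β).Adj (some ⟨i, j⟩) (some ⟨i', j'⟩) ↔
      i = i' ∧ ((j' : ℕ) = j + 1 ∨ (j : ℕ) = j' + 1) := by
  simp only [spider, fromRel_adj]
  constructor
  · rintro ⟨-, h | h⟩ <;> simp_all
  · rintro ⟨rfl, h⟩
    refine ⟨fun h' => ?_, by simp_all⟩
    simp only [Option.some.injEq, Sigma.mk.injEq, heq_eq_eq, true_and] at h'
    subst h'
    omega

def legFold (i : Fin α) : Option ((_ : Fin α) × Fin β) → ℤ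
  | none => 0
  | some ⟨i', j⟩ => if i' = i then j + 1 else -(j + 1)

theorem abs_legFold_sub_le_one (i : Fin α) {x y : Option ((_ : Fin α) × Fin β)}
    (h : (balancedSpider α β).Adj x y) : |legFold i x - legFold i y| ≤ 1 := by
  rw [abs_le]
  rcases x with _ | ⟨i₁, j₁⟩ <;> rcases y with _ | ⟨i₂, j₂⟩ <;> simp only [legFold] <;>
    simp at h <;> split_ifs <;> omega

theorem balancedSpider_psdForces {v w : Option ((_ : Fin α) × Fin β)}
    (hv : v ∈ B) (hw : w ∉ B) (hvw : (balancedSpider α β).Adj v w) :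
    psdForces (balancedSpider α β) B v w := by
  rcases v with _ | ⟨i, j⟩
  · refine psdForces_of_separating (Option.map Sigma.fst) hv hw hvw ?_ ?_
    · rintro (_ | ⟨i₁, j₁⟩) (_ | ⟨i₂, j₂⟩) h hx hy <;> simp_all
    · rintro (_ | ⟨i₁, j₁⟩) hu hσ <;> rcases w with _ | ⟨i₂, j₂⟩ <;> simp_all [Fin.ext_iff]
  · -- the neighbours of `some ⟨i, j⟩` are told apart by lying beyond it on leg `i` or not
    refine psdForces_of_separating (fun x => (j : ℤ) + 1 < legFold i x) hv hw hvw ?_ ?_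
    · rintro (_ | ⟨i₁, j₁⟩) (_ | ⟨i₂, j₂⟩) h hx hy <;> simp only [legFold] <;>
        simp [Fin.ext_iff] at h hx hy <;> split_ifs <;> simp <;> omega
    · rintro (_ | ⟨i₁, j₁⟩) hu hσ <;> rcases w with _ | ⟨i₂, j₂⟩ <;> simp only [legFold] at hσ <;>
        simp [Fin.ext_iff] at hu hvw ⊢ <;> split_ifs at hσ <;> simp at hσ <;> omega

theorem mem_iterate_succ_of_adj {t : ℕ} {v w : Option ((_ : Fin α) × Fin β)}
    (hv : v ∈ (psdStep (balancedSpider α β))^[t] B) (hvw : (balancedSpider α β).Adj v w) :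
    w ∈ (psdStep (balancedSpider α β))^[t + 1] B := by
  rw [Function.iterate_succ_apply']
  by_cases hw : w ∈ (psdStep (balancedSpider α β))^[t] B
  · exact Or.inl hw
  · exact Or.inr ⟨v, balancedSpider_psdForces hv hw hvw⟩

theorem mem_iterate_of_mem_leg {t : ℕ} {i : Fin α} {a : Fin β}
    (ha : some ⟨i, a⟩ ∈ (psdStep (balancedSpider α β))^[t] B) :
    ∀ (n : ℕ) (j : Fin β), |(j : ℤ) - a| ≤ n →
      some ⟨i, j⟩ ∈ (psdStep (balancedSpider α β))^[t + n] B := by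
  intro n
  induction n with
  | zero =>
    intro j hj
    obtain rfl : j = a := Fin.ext (by simp only [Nat.cast_zero, abs_nonpos_iff] at hj; omega)
    exact ha
  | succ n ih =>
    intro j hj
    by_cases hjn : |(j : ℤ) - a| ≤ n
    · exact monotone_iterate_psdStep (Nat.le_succ (t + n)) (ih j hjn)
    rw [abs_le] at hj hjn
    obtain ⟨j', hj'⟩ : ∃ j' : Fin β, (j : ℕ) = j' + 1 ∧ a < j ∨ (j' : ℕ) = j + 1 ∧ j < a :=
      if h : a < j then ⟨⟨j - 1, by omega⟩, Or.inl ⟨by simp; omega, h⟩⟩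
      else ⟨⟨j + 1, by omega⟩, Or.inr ⟨rfl, by omega⟩⟩
    refine mem_iterate_succ_of_adj (ih j' ?_) ?_
    · rw [abs_le]; omega
    · simp only [balancedSpider_adj_some_some, true_and]; omega

theorem mem_iterate_of_center {t : ℕ} (h : none ∈ (psdStep (balancedSpider α β))^[t] B)
    (i : Fin α) (j : Fin β) : some ⟨i, j⟩ ∈ (psdStep (balancedSpider α β))^[t + 1 + j] B := by
  have h₀ := mem_iterate_succ_of_adj h
    ((balancedSpider_adj_none_some (i := i) (j := ⟨0, j.pos⟩)).mpr rfl)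
  exact mem_iterate_of_mem_leg h₀ j j (by simp)

theorem exists_abs_legFold_sub_le {t : ℕ} (ht : (psdStep (balancedSpider α β))^[t] B = Set.univ)
    (i : Fin α) (x : Option ((_ : Fin α) × Fin β)) :
    ∃ b ∈ B, |legFold i x - legFold i b| ≤ t := by
  obtain ⟨b, hb, hd⟩ := exists_dist_le_of_mem_iterate_psdStep (legFold i)
    (fun x y h => by rw [Int.dist_eq']; exact_mod_cast abs_legFold_sub_le_one i h) t x
    (ht ▸ Set.mem_univ x)
  exact ⟨b, hb, by rw [Int.dist_eq'] at hd; exact_mod_cast hd⟩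

def legPositions (B : Set (Option ((_ : Fin α) × Fin β))) (i : Fin α) : Set ℕ :=
  Fin.val '' {j : Fin β | some ⟨i, j⟩ ∈ B}

theorem ncard_legPositions (B : Set (Option ((_ : Fin α) × Fin β))) (i : Fin α) :
    (legPositions B i).ncard = {x ∈ B | ∃ j : Fin β, x = some ⟨i, j⟩}.ncard := by
  have hleg : {x ∈ B | ∃ j : Fin β, x = some ⟨i, j⟩} =
      (fun j : Fin β => some ⟨i, j⟩) '' {j : Fin β | some ⟨i, j⟩ ∈ B} := by
    ext x
    constructor
    · rintro ⟨hx, j, rfl⟩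
      exact ⟨j, hx, rfl⟩
    · rintro ⟨j, hj, rfl⟩
      exact ⟨hj, j, rfl⟩
  rw [hleg, legPositions, Set.ncard_image_of_injective _ Fin.val_injective,
    Set.ncard_image_of_injective _ (fun j j' h => by simpa using h)]

theorem legPositions_finite (B : Set (Option ((_ : Fin α) × Fin β))) (i : Fin α) :
    (legPositions B i).Finite :=
  (Set.toFinite _).image _

theorem some_mem_legPositions {i : Fin α} {j : Fin β} (h : some ⟨i, j⟩ ∈ B) :
    (j : ℕ) ∈ legPositions B i :=
  ⟨j, h, rfl⟩

theorem leg_length_le {s t : ℕ} (i : Fin α) (hS : (legPositions B i).ncard = s)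
    (ht : (psdStep (balancedSpider α β))^[t] B = Set.univ) : β ≤ (2 * s + 1) * t + s := by
  have hcover : ∀ q < β, q < t ∨ ∃ b ∈ legPositions B i, |(q : ℤ) - b| ≤ t := by
    intro q hq
    obtain ⟨b, hb, hd⟩ := exists_abs_legFold_sub_le ht i (some ⟨i, ⟨q, hq⟩⟩)
    rw [abs_le] at hd
    rcases b with _ | ⟨i', j⟩
    · simp only [legFold, if_pos] at hd
      omega
    · by_cases hi : i' = i
      · subst hi
        refine Or.inr ⟨j, some_mem_legPositions hb, ?_⟩
        simp only [legFold, if_pos] at hd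
        rw [abs_le]; omega
      · simp only [legFold, if_pos, if_neg hi] at hd
        omega
  have hcount := le_add_card_mul_of_cover (legPositions_finite B i) hcover
  rw [hS] at hcount
  linarith

theorem leg_length_succ_le {s t : ℕ} (hs : 1 ≤ s) (hc : none ∉ B) (i₀ : Fin α)
    (hS : ∀ i, (legPositions B i).ncard = s)
    (ht : (psdStep (balancedSpider α β))^[t] B = Set.univ) : β + 1 ≤ 2 * s * t + s := by
  classical
  have hex : ∃ m, ∃ i, m ∈ legPositions B i := by
    obtain ⟨m, hm⟩ := Set.nonempty_of_ncard_ne_zero (s := legPositions B i₀) (by rw [hS]; omega)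
    exact ⟨m, i₀, hm⟩
  obtain ⟨i, hm⟩ := Nat.find_spec hex
  set m := Nat.find hex
  have hmin : ∀ i' (j : Fin β), some ⟨i', j⟩ ∈ B → m ≤ j :=
    fun i' j h => Nat.find_min' hex ⟨i', some_mem_legPositions h⟩
  have hcenter : m + 1 ≤ t := by
    obtain ⟨_ | ⟨i', j⟩, hb, hd⟩ := exists_abs_legFold_sub_le ht i none
    · exact absurd hb hc
    · have := hmin i' j hb
      simp only [legFold] at hd
      split_ifs at hd <;> rw [abs_le] at hd <;> omega
  have hcover : ∀ q < β, q < m + t + 1 ∨ ∃ b ∈ legPositions B i \ {m}, |(q : ℤ) - b| ≤ t := by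
    intro q hq
    obtain ⟨_ | ⟨i', j⟩, hb, hd⟩ := exists_abs_legFold_sub_le ht i (some ⟨i, ⟨q, hq⟩⟩)
    · exact absurd hb hc
    have hmj := hmin i' j hb
    rw [abs_le] at hd
    by_cases hi : i' = i
    · subst hi
      simp only [legFold, if_pos] at hd
      by_cases hjm : (j : ℕ) = m
      · left; omega
      · exact Or.inr ⟨j, ⟨some_mem_legPositions hb, hjm⟩, by rw [abs_le]; omega⟩
    · simp only [legFold, if_pos, if_neg hi] at hd
      left; omega
  have hcount := le_add_card_mul_of_cover ((legPositions_finite B i).sdiff) hcover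
  rw [Set.ncard_sdiff_singleton_of_mem hm, hS i] at hcount
  obtain ⟨s', rfl⟩ : ∃ s', s = s' + 1 := ⟨s - 1, by omega⟩
  rw [Nat.add_sub_cancel] at hcount
  nlinarith

def legBlue (α β : ℕ) (P : Finset ℕ) : Finset (Option ((_ : Fin α) × Fin β)) :=
  (Finset.univ.filter fun y : (_ : Fin α) × Fin β => (y.2 : ℕ) ∈ P).map Function.Embedding.some

@[simp]
theorem some_mem_legBlue {P : Finset ℕ} {i : Fin α} {j : Fin β} :
    some ⟨i, j⟩ ∈ legBlue α β P ↔ (j : ℕ) ∈ P := by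
  simp [legBlue]

@[simp]
theorem none_notMem_legBlue {P : Finset ℕ} : none ∉ legBlue α β P := by
  simp [legBlue]

theorem legPositions_eq {i : Fin α} {P : Finset ℕ}
    (hP : ∀ p ∈ P, p < β) (hB : ∀ j : Fin β, some ⟨i, j⟩ ∈ B ↔ (j : ℕ) ∈ P) :
    legPositions B i = P := by
  ext p
  refine ⟨fun ⟨j, hj, hjp⟩ => hjp ▸ (hB j).mp hj, fun hp => ⟨⟨p, hP p hp⟩, (hB _).mpr hp, rfl⟩⟩

theorem ncard_legPositions_eq {s a T : ℕ} (hsβ : s ≤ β) {i : Fin α}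
    (hB : ∀ j : Fin β, some ⟨i, j⟩ ∈ B ↔
      (j : ℕ) ∈ (Finset.range s).image (spacedPositions s β a T)) :
    (legPositions B i).ncard = s := by
  have hP : ∀ p ∈ (Finset.range s).image (spacedPositions s β a T), p < β := by
    simp only [Finset.mem_image, Finset.mem_range]
    rintro _ ⟨k, hk, rfl⟩
    exact spacedPositions_lt hsβ hk
  rw [legPositions_eq hP hB, Set.ncard_coe_finset,
    Finset.card_image_of_injective _ spacedPositions_strictMono.injective, Finset.card_range]

theorem exists_forcing_center_mem {s T : ℕ} (hs : 1 ≤ s) (hsβ : s ≤ β)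
    (hT : β ≤ (2 * s + 1) * T + s) :
    ∃ B : Finset (Option ((_ : Fin α) × Fin β)), none ∈ B ∧
      (∀ i, (legPositions (B : Set (Option ((_ : Fin α) × Fin β))) i).ncard = s) ∧
      (psdStep (balancedSpider α β))^[T] ↑B = Set.univ := by
  -- the center colours the positions `< T`, the ball around the first blue position `2T` the next
  set P := (Finset.range s).image (spacedPositions s β (2 * T) T)
  set B : Finset (Option ((_ : Fin α) × Fin β)) := insert none (legBlue α β P)
  have hB (i : Fin α) (j : Fin β) :
      some ⟨i, j⟩ ∈ (B : Set (Option ((_ : Fin α) × Fin β))) ↔ (j : ℕ) ∈ P := by simp [B]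
  have hspaced {k : ℕ} (hk : k < s) (i : Fin α) :
      some ⟨i, ⟨spacedPositions s β (2 * T) T k, spacedPositions_lt hsβ hk⟩⟩ ∈
        (B : Set (Option ((_ : Fin α) × Fin β))) :=
    (hB i _).mpr (Finset.mem_image_of_mem _ (Finset.mem_range.mpr hk))
  have hcenter : none ∈ (B : Set (Option ((_ : Fin α) × Fin β))) := Finset.mem_insert_self _ _
  refine ⟨B, hcenter, fun i => ncard_legPositions_eq hsβ (hB i), Set.eq_univ_of_forall ?_⟩
  have hβ : β ≤ (s - 1) * (2 * T + 1) + 2 * T + T + 1 := by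
    obtain ⟨s', rfl⟩ : ∃ s', s = s' + 1 := ⟨s - 1, by omega⟩
    rw [Nat.add_sub_cancel]
    nlinarith
  rintro (_ | ⟨i, ⟨q, hq⟩⟩)
  · exact subset_iterate_psdStep T hcenter
  rcases exists_abs_sub_spacedPositions_le hs hβ hq with hqT | ⟨k, hk, hqk⟩
  · exact monotone_iterate_psdStep (by simp; omega)
      (mem_iterate_of_center (subset_iterate_psdStep 0 hcenter) i ⟨q, hq⟩)
  · simpa using mem_iterate_of_mem_leg (subset_iterate_psdStep 0 (hspaced hk i)) T ⟨q, hq⟩ hqk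

theorem exists_forcing_center_not_mem {s T : ℕ} (i₀ : Fin α) (hs : 1 ≤ s) (hsβ : s ≤ β)
    (hT : β + 1 ≤ 2 * s * T + s) :
    ∃ B : Finset (Option ((_ : Fin α) × Fin β)), none ∉ B ∧
      (∀ i, (legPositions (B : Set (Option ((_ : Fin α) × Fin β))) i).ncard = s) ∧
      (psdStep (balancedSpider α β))^[T] ↑B = Set.univ := by
  obtain ⟨T', rfl⟩ : ∃ T', T = T' + 1 := ⟨T - 1, by rcases T with _ | T <;> simp at hT ⊢; omega⟩
  -- the first blue vertex sits at position `T - 1`, so it reaches the center by time `T`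
  set P := (Finset.range s).image (spacedPositions s β T' (T' + 1))
  set B : Finset (Option ((_ : Fin α) × Fin β)) := legBlue α β P
  have hB (i : Fin α) (j : Fin β) :
      some ⟨i, j⟩ ∈ (B : Set (Option ((_ : Fin α) × Fin β))) ↔ (j : ℕ) ∈ P := by simp [B]
  have hspaced {k : ℕ} (hk : k < s) (i : Fin α) :
      some ⟨i, ⟨spacedPositions s β T' (T' + 1) k, spacedPositions_lt hsβ hk⟩⟩ ∈
        (B : Set (Option ((_ : Fin α) × Fin β))) :=
    (hB i _).mpr (Finset.mem_image_of_mem _ (Finset.mem_range.mpr hk))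
  refine ⟨B, none_notMem_legBlue, fun i => ncard_legPositions_eq hsβ (hB i),
    Set.eq_univ_of_forall ?_⟩
  have hβ : β ≤ (s - 1) * (2 * (T' + 1) + 1) + T' + (T' + 1) + 1 := by
    obtain ⟨s', rfl⟩ : ∃ s', s = s' + 1 := ⟨s - 1, by omega⟩
    rw [Nat.add_sub_cancel]
    nlinarith
  rintro (_ | ⟨i, ⟨q, hq⟩⟩)
  · have hp : spacedPositions s β T' (T' + 1) 0 ≤ T' := by unfold spacedPositions; omega
    have h₀ := mem_iterate_of_mem_leg (subset_iterate_psdStep 0 (hspaced hs i₀))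
      (spacedPositions s β T' (T' + 1) 0) ⟨0, by omega⟩ (by simp)
    exact monotone_iterate_psdStep (by omega) (mem_iterate_succ_of_adj h₀ (by simp))
  rcases exists_abs_sub_spacedPositions_le hs hβ hq with hqT | ⟨k, hk, hqk⟩
  · omega
  · simpa using mem_iterate_of_mem_leg (subset_iterate_psdStep 0 (hspaced hk i)) _ ⟨q, hq⟩ hqk

end Spider

theorem stmt5_general (α β s : ℕ) (hα : 3 ≤ α) (hs : 1 ≤ s) (hsβ : s ≤ β) :
    (((sInf {t : ℕ | ∃ B : Finset (Option ((_ : Fin α) × Fin β)),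
        IsPSDForcing (balancedSpider α β) ↑B ∧ none ∈ B ∧
        (∀ i : Fin α,
          {x ∈ (B : Set (Option ((_ : Fin α) × Fin β))) | ∃ j : Fin β, x = some ⟨i, j⟩}.ncard
            = s) ∧
        t = psdPt (balancedSpider α β) ↑B} : ℕ) : ℤ)
      = ⌈((β : ℝ) - s) / (2 * s + 1)⌉) ∧
    (((sInf {t : ℕ | ∃ B : Finset (Option ((_ : Fin α) × Fin β)),
        IsPSDForcing (balancedSpider α β) ↑B ∧ none ∉ B ∧
        (∀ i : Fin α,
          {x ∈ (B : Set (Option ((_ : Fin α) × Fin β))) | ∃ j : Fin β, x = some ⟨i, j⟩}.ncard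
            = s) ∧
        t = psdPt (balancedSpider α β) ↑B} : ℕ) : ℤ)
      = ⌈((β : ℝ) + 1 - s) / (2 * s)⌉) := by
  let i₀ : Fin α := ⟨0, by omega⟩
  have hsβ' : (s : ℝ) ≤ β := by exact_mod_cast hsβ
  have hx₁ (t : ℕ) : ((β : ℝ) - s) / (2 * s + 1) ≤ t ↔ β ≤ (2 * s + 1) * t + s := by
    simpa using natCast_sub_div_le_natCast_iff (a := β) (b := s) (c := 2 * s + 1) (by omega)
  have hx₂ (t : ℕ) : ((β : ℝ) + 1 - s) / (2 * s) ≤ t ↔ β + 1 ≤ 2 * s * t + s := by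
    simpa using natCast_sub_div_le_natCast_iff (a := β + 1) (b := s) (c := 2 * s) (by omega)
  refine ⟨natCast_sInf_eq_ceil (div_nonneg (by linarith) (by positivity)) ?_ ?_,
    natCast_sInf_eq_ceil (div_nonneg (by linarith) (by positivity)) ?_ ?_⟩
  · rintro _ ⟨B, hB, -, hS, rfl⟩
    exact (hx₁ _).mpr <|
      leg_length_le i₀ ((ncard_legPositions _ _).trans (hS i₀)) (iterate_psdPt hB)
  · obtain ⟨B, hc, hS, hT⟩ := exists_forcing_center_mem hs hsβ ((hx₁ _).mp (Nat.le_ceil _))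
    exact ⟨_, ⟨B, ⟨_, hT⟩, hc, fun i => (ncard_legPositions _ i).symm.trans (hS i), rfl⟩,
      psdPt_le hT⟩
  · rintro _ ⟨B, hB, hc, hS, rfl⟩
    exact (hx₂ _).mpr <| leg_length_succ_le hs hc i₀
      (fun i => (ncard_legPositions _ _).trans (hS i)) (iterate_psdPt hB)
  · obtain ⟨B, hc, hS, hT⟩ := exists_forcing_center_not_mem i₀ hs hsβ ((hx₂ _).mp (Nat.le_ceil _))
    exact ⟨_, ⟨B, ⟨_, hT⟩, hc, fun i => (ncard_legPositions _ i).symm.trans (hS i), rfl⟩,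
      psdPt_le hT⟩

/-- For the balanced spider `T_{α,β}` (`α ≥ 3`, `1 ≤ s ≤ β`): the minimum PSD-propagation
time over PSD-forcing sets consisting of exactly `s` vertices from each leg together with the
center equals `⌈(β - s)/(2s + 1)⌉`, and the minimum over those consisting of exactly `s`
vertices from each leg and not the center equals `⌈(β + 1 - s)/(2s)⌉`. -/
theorem stmt5 (α β s : ℕ) (hα : 3 ≤ α) (hβ : 1 ≤ β) (hs : 1 ≤ s) (hsβ : s ≤ β) :
    (((sInf {t : ℕ | ∃ B : Finset (Option ((_ : Fin α) × Fin β)),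
        IsPSDForcing (balancedSpider α β) ↑B ∧ none ∈ B ∧
        (∀ i : Fin α,
          {x ∈ (B : Set (Option ((_ : Fin α) × Fin β))) | ∃ j : Fin β, x = some ⟨i, j⟩}.ncard
            = s) ∧
        t = psdPt (balancedSpider α β) ↑B} : ℕ) : ℤ)
      = ⌈((β : ℝ) - s) / (2 * s + 1)⌉) ∧
    (((sInf {t : ℕ | ∃ B : Finset (Option ((_ : Fin α) × Fin β)),
        IsPSDForcing (balancedSpider α β) ↑B ∧ none ∉ B ∧
        (∀ i : Fin α,
          {x ∈ (B : Set (Option ((_ : Fin α) × Fin β))) | ∃ j : Fin β, x = some ⟨i, j⟩}.ncard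
            = s) ∧
        t = psdPt (balancedSpider α β) ↑B} : ℕ) : ℤ)
      = ⌈((β : ℝ) + 1 - s) / (2 * s)⌉) :=
  stmt5_general α β s hα hs hsβ
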